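/- Let A be a set of ordinals. Then the set X := {β : there exists a ∈ A_β with w < a for every w ∈ W_β(A)} is a finite set of ordinals. -/

import Mathlib

open Set

/-- `x` is a limit point of the set `B` of ordinals: `x` is a limit ordinal and
`B ∩ x` is unbounded in `x`. -/
def limitPts (B : Set Ordinal) : Set Ordinal :=
  {x : Ordinal | Order.IsSuccLimit x ∧ ∀ y < x, ∃ b ∈ B, y < b ∧ b < x}

/-- `CBge A α` is `A_{≥α}`, the set of elements of `A` of Cantor–Bendixson rank `≥ α`:
`A_{≥α} = A \ ⋃_{β<α} A_β` where `A_β = A_{≥β} \ (A_{≥β})*`. -/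
noncomputable def CBge (A : Set Ordinal) : Ordinal → Set Ordinal :=
  Ordinal.lt_wf.fix (C := fun _ => Set Ordinal) fun α IH =>
    A \ ⋃ (β : Ordinal), ⋃ (h : β < α), (IH β h \ limitPts (IH β h))

/-- `CBpart A β` is `A_β`, the set of elements of `A` of Cantor–Bendixson rank exactly `β`. -/
noncomputable def CBpart (A : Set Ordinal) (β : Ordinal) : Set Ordinal :=
  CBge A β \ limitPts (CBge A β)

/-- The set of ω-limits of a set `B` of ordinals: suprema of strictly increasing
ℕ-indexed sequences of elements of `B`. -/
def omegaLimits (B : Set Ordinal) : Set Ordinal :=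
  {l : Ordinal | ∃ f : ℕ → Ordinal, StrictMono f ∧ (∀ n, f n ∈ B) ∧ l = ⨆ n, f n}

/-- `Wpart A β` is `W_β(A)`, the set of ω-limits of `A_β`. -/
noncomputable def Wpart (A : Set Ordinal) (β : Ordinal) : Set Ordinal :=
  omegaLimits (CBpart A β)

/-- `Sseq A β lam` is `S_β^λ(A) = {x ∈ A_β : sup(W_β(A) ∩ λ) < x < λ}`. -/
noncomputable def Sseq (A : Set Ordinal) (β lam : Ordinal) : Set Ordinal :=
  {x : Ordinal | x ∈ CBpart A β ∧ sSup (Wpart A β ∩ Set.Iio lam) < x ∧ x < lam}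

/-!
If some element of `A_β` lies above every ω-limit of `A_β`, then `A_β` has a greatest element
`λ_β`: otherwise an increasing ω-sequence in `A_β` starting at that element would have its
supremum in `W_β(A)`. For `β < γ`, every point of `A_γ` is a limit point of `A_{≥β}`, hence is
approached from below by points of `A_β`; so `λ_γ < λ_β`. An order-reversing map from a set of
ordinals into the ordinals has finite domain, since the set is well-founded in both directions.
-/

theorem Set.finite_of_strictAntiOn {α β : Type*} [LinearOrder α] [WellFoundedLT α] [Preorder β]
    [WellFoundedLT β] {s : Set α} {f : α → β} (hf : StrictAntiOn f s) : s.Finite := by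
  have : WellFoundedGT s :=
    (show StrictMono fun x : sᵒᵈ => f (OrderDual.ofDual x).1 from
      fun x y hxy => hf (OrderDual.ofDual y).2 (OrderDual.ofDual x).2 hxy).wellFoundedLT
  have := Finite.of_wellFoundedLT_wellFoundedGT s
  exact s.toFinite

theorem exists_isGreatest_of_forall_omegaLimits_lt {B : Set Ordinal} {a : Ordinal} (ha : a ∈ B)
    (hlt : ∀ w ∈ omegaLimits B, w < a) : ∃ m, IsGreatest B m := by
  by_contra! hB
  have : NoMaxOrder B := ⟨fun b => by
    obtain ⟨c, hc, hbc⟩ : ∃ c ∈ B, (b : Ordinal) < c := by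
      simpa [IsGreatest, upperBounds, b.2] using hB b
    exact ⟨⟨c, hc⟩, hbc⟩⟩
  obtain ⟨f, hf, hf0⟩ := Nat.exists_strictMono' (⟨a, ha⟩ : B)
  have hw : (⨆ n, (f n : Ordinal)) ∈ omegaLimits B :=
    ⟨fun n => f n, fun m n hmn => hf hmn, fun n => (f n).2, rfl⟩
  refine (hlt _ hw).not_ge ?_
  calc a = f 0 := by rw [hf0]
    _ ≤ ⨆ n, (f n : Ordinal) := Ordinal.le_iSup _ 0

section CantorBendixson

variable (A : Set Ordinal)

theorem CBge_eq (α : Ordinal) :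
    CBge A α = A \ ⋃ (β : Ordinal), ⋃ (_ : β < α), CBpart A β := by
  rw [CBge, Ordinal.lt_wf.fix_eq]
  rfl

variable {A}

theorem notMem_CBpart_of_mem_CBge {α β x : Ordinal} (hx : x ∈ CBge A α) (hβα : β < α) :
    x ∉ CBpart A β := by
  rw [CBge_eq] at hx
  exact fun hβ => hx.2 (mem_biUnion hβα hβ)

theorem CBge_anti : Antitone (CBge A) := by
  intro α α' hαα'
  rw [CBge_eq, CBge_eq]
  exact sdiff_subset_sdiff_right <| iUnion_mono fun β => iUnion_subset fun hβ =>
    subset_iUnion_of_subset (hβ.trans_le hαα') subset_rfl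

theorem mem_limitPts_CBge_of_lt {α β x : Ordinal} (hx : x ∈ CBge A α) (hβα : β < α) :
    x ∈ limitPts (CBge A β) := by
  by_contra h
  exact notMem_CBpart_of_mem_CBge hx hβα ⟨CBge_anti hβα.le hx, h⟩

theorem exists_mem_CBpart_of_mem_limitPts {β x y : Ordinal} (hx : x ∈ limitPts (CBge A β))
    (hyx : y < x) : ∃ b ∈ CBpart A β, y < b ∧ b < x := by
  obtain ⟨b, hb, hyb, hbx⟩ := hx.2 y hyx
  obtain ⟨m, ⟨hm, hym, hmx⟩, hmin⟩ :=
    Ordinal.lt_wf.has_min {b | b ∈ CBge A β ∧ y < b ∧ b < x} ⟨b, hb, hyb, hbx⟩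
  refine ⟨m, ⟨hm, fun hlim => ?_⟩, hym, hmx⟩
  obtain ⟨c, hc, hyc, hcm⟩ := hlim.2 y hym
  exact hmin c ⟨hc, hyc, hcm.trans hmx⟩ hcm

theorem lt_of_isGreatest_CBpart {β γ m x : Ordinal} (hm : IsGreatest (CBpart A β) m)
    (hβγ : β < γ) (hx : x ∈ CBge A γ) : x < m := by
  have hlim := mem_limitPts_CBge_of_lt hx hβγ
  refine lt_of_not_ge fun hmx => ?_
  obtain rfl | hmx := hmx.eq_or_lt
  · exact hm.1.2 hlim
  · obtain ⟨b, hb, hmb, -⟩ := exists_mem_CBpart_of_mem_limitPts hlim hmx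
    exact (hm.2 hb).not_gt hmb

theorem finite_setOf_exists_isGreatest_CBpart :
    {β | ∃ m, IsGreatest (CBpart A β) m}.Finite := by
  refine Set.finite_of_strictAntiOn (f := fun β => sSup (CBpart A β)) ?_
  rintro β ⟨m, hm⟩ γ ⟨n, hn⟩ hβγ
  dsimp only
  rw [hm.csSup_eq, hn.csSup_eq]
  exact lt_of_isGreatest_CBpart hm hβγ hn.1.1

end CantorBendixson

/-- The set of ranks `β` for which some element of `A_β` lies strictly above
every element of `W_β(A)` is finite. -/
theorem finite_ranks_with_element_above_omegaLimits (A : Set Ordinal) :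
    {β : Ordinal | ∃ a ∈ CBpart A β, ∀ w ∈ Wpart A β, w < a}.Finite :=
  finite_setOf_exists_isGreatest_CBpart.subset fun _ ⟨_, ha, hlt⟩ =>
    exists_isGreatest_of_forall_omegaLimits_lt ha hlt
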